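/- For every n ≥ 1 there exists a list w over Fin 2 with no triple repeats such that every list u over Fin 2 of length n with no triple repeats is an infix of w, and moreover w has length at most 2·(n+1)·Fib(n+1), where Fib is the Fibonacci sequence (Fib(0)=0, Fib(1)=1). (This gives an upper bound, via the Fibonacci number formula, on the length of n-power words and hence of the resulting 2-variable semigroup identities.) -/

import Mathlib

/-!
Words over `Fin 2` with no triple repeat that start with the letter `a` are `a :: v` with `v`
starting with `a + 1`, or `a :: a :: v` with `v` empty or starting with `a + 1`; so there are
`Fib (n + 1)` of length `n` for each first letter. Concatenate all `2 * Fib (n + 1)` of them,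
inserting one letter at each junction where the last letter of a word equals the first letter of
the next: a triple repeat across a junction would need equal letters on both sides of it, so the
result has no triple repeat, and its length is at most `(n + 1) * 2 * Fib (n + 1)`.
-/

variable {α : Type*}

def NoTripleRepeat (l : List α) : Prop := ∀ a : α, ¬ [a, a, a] <:+: l

namespace NoTripleRepeat

theorem of_length_lt_three {l : List α} (hl : l.length < 3) : NoTripleRepeat l :=
  fun _ h => by simpa using h.length_le.trans_lt hl

theorem cons_iff {a : α} {l : List α} :
    NoTripleRepeat (a :: l) ↔ ¬ [a, a] <+: l ∧ NoTripleRepeat l := by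
  simp only [NoTripleRepeat, List.infix_cons_iff, List.cons_prefix_cons, not_or, forall_and]
  constructor
  · rintro ⟨h₁, h₂⟩
    exact ⟨fun h => h₁ a ⟨rfl, h⟩, h₂⟩
  · rintro ⟨h₁, h₂⟩
    exact ⟨fun b ⟨hb, h⟩ => h₁ (hb ▸ h), h₂⟩

theorem append {x y : List α} (hx : NoTripleRepeat x) (hy : NoTripleRepeat y)
    (hxy : ∀ c ∈ x.getLast?, ∀ d ∈ y.head?, c ≠ d) : NoTripleRepeat (x ++ y) := by
  intro a h
  obtain h | h | ⟨l₁, l₂, h₁, h₂, hl, hs, hp⟩ := List.infix_append_iff_ne_nil.mp h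
  · exact hx a h
  · exact hy a h
  · have h_eq : ∀ b ∈ l₁ ++ l₂, b = a := by simp [← hl]
    refine hxy _ ((hs.getLast h₁).symm ▸ List.getLast_mem_getLast? _) _
      ((hp.head h₂).symm ▸ List.head_mem_head? _) ?_
    rw [h_eq _ (List.mem_append_left _ (List.getLast_mem h₁)),
      h_eq _ (List.mem_append_right _ (List.head_mem h₂))]

end NoTripleRepeat

theorem Fin.two_eq_add_one_or_eq (x y : Fin 2) : y = x + 1 ∨ y = x := by
  revert x y
  decide

def noTripleRepeatWords : ℕ → Fin 2 → List (List (Fin 2))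
  | 0, _ => [[]]
  | 1, a => [[a]]
  | n + 2, a => (noTripleRepeatWords (n + 1) (a + 1)).map (a :: ·) ++
      (noTripleRepeatWords n (a + 1)).map (a :: a :: ·)

theorem length_noTripleRepeatWords : ∀ n a, (noTripleRepeatWords n a).length = Nat.fib (n + 1)
  | 0, _ => rfl
  | 1, _ => rfl
  | n + 2, a => by
    rw [noTripleRepeatWords, List.length_append, List.length_map, List.length_map,
      length_noTripleRepeatWords, length_noTripleRepeatWords, Nat.fib_add_two (n := n + 1),
      add_comm]

theorem mem_noTripleRepeatWords : ∀ {n : ℕ} {a : Fin 2} {u : List (Fin 2)},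
    u ∈ noTripleRepeatWords n a ↔ u.length = n ∧ NoTripleRepeat u ∧ ∀ b ∈ u.head?, b = a
  | 0, a, u => by cases u <;> simp [noTripleRepeatWords, NoTripleRepeat.of_length_lt_three]
  | 1, a, u => by
    rcases u with _ | ⟨x, _ | ⟨y, w⟩⟩ <;>
      simp [noTripleRepeatWords, NoTripleRepeat.of_length_lt_three, eq_comm]
  | n + 2, a, x :: v => by
    have ih₁ := @mem_noTripleRepeatWords (n + 1) (a + 1)
    have ih₀ := @mem_noTripleRepeatWords n (a + 1)
    rcases eq_or_ne x a with rfl | hxa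
    · rcases v with _ | ⟨y, w⟩
      · simp [noTripleRepeatWords, ih₁]
      obtain rfl | rfl := Fin.two_eq_add_one_or_eq x y
      · simp [noTripleRepeatWords, ih₁, ih₀, NoTripleRepeat.cons_iff, -Fin.forall_fin_two]
      rcases w with _ | ⟨z, w⟩
      · simp [noTripleRepeatWords, ih₁, ih₀, NoTripleRepeat.of_length_lt_three, eq_comm]
      obtain rfl | rfl := Fin.two_eq_add_one_or_eq y z <;>
        simp [noTripleRepeatWords, ih₁, ih₀, NoTripleRepeat.cons_iff, -Fin.forall_fin_two]
    · simp [noTripleRepeatWords, hxa, hxa.symm]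
  | n + 2, a, [] => by simp [noTripleRepeatWords]

def sep (x y : List (Fin 2)) : List (Fin 2) :=
  match x.getLast?, y.head? with
  | some c, some d => if c = d then [c + 1] else []
  | _, _ => []

theorem length_sep_le (x y : List (Fin 2)) : (sep x y).length ≤ 1 := by
  unfold sep
  split
  · split_ifs <;> simp
  · simp

theorem NoTripleRepeat.append_sep_append {x y : List (Fin 2)} (hx : NoTripleRepeat x)
    (hy : NoTripleRepeat y) : NoTripleRepeat (x ++ sep x y ++ y) := by
  rcases hc : x.getLast? with _ | c
  · simpa [sep, hc] using hx.append hy (by simp [hc])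
  rcases hd : y.head? with _ | d
  · simpa [sep, hc, hd] using hx.append hy (by simp [hd])
  by_cases hcd : c = d
  · subst hcd
    have hxc : NoTripleRepeat (x ++ [c + 1]) :=
      hx.append (.of_length_lt_three (by simp)) (by simp [hc])
    simpa [sep, hc, hd] using hxc.append hy (by simp [hd])
  · simpa [sep, hc, hd, hcd] using hx.append hy (by simp [hc, hd, hcd])

def joinWithSep (l : List (List (Fin 2))) : List (Fin 2) :=
  l.foldr (fun x w => x ++ sep x w ++ w) []

theorem noTripleRepeat_joinWithSep {l : List (List (Fin 2))} (h : ∀ u ∈ l, NoTripleRepeat u) :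
    NoTripleRepeat (joinWithSep l) := by
  induction l with
  | nil => exact .of_length_lt_three (by simp [joinWithSep])
  | cons x l ih =>
    simp only [List.mem_cons, forall_eq_or_imp] at h
    exact h.1.append_sep_append (ih h.2)

theorem infix_joinWithSep {l : List (List (Fin 2))} {u : List (Fin 2)} (hu : u ∈ l) :
    u <:+: joinWithSep l := by
  induction l with
  | nil => simp at hu
  | cons x l ih =>
    rcases List.mem_cons.mp hu with rfl | hu
    · exact ((List.prefix_append _ _).trans (List.prefix_append _ _)).isInfix
    · exact (ih hu).trans (List.suffix_append _ _).isInfix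

theorem length_joinWithSep_le {l : List (List (Fin 2))} {m : ℕ} (h : ∀ u ∈ l, u.length ≤ m) :
    (joinWithSep l).length ≤ l.length * (m + 1) := by
  induction l with
  | nil => simp [joinWithSep]
  | cons x l ih =>
    simp only [List.mem_cons, forall_eq_or_imp] at h
    have h_sep := length_sep_le x (joinWithSep l)
    have h_rest := ih h.2
    simp only [joinWithSep, List.foldr_cons, List.length_append, List.length_cons,
      add_one_mul] at h_sep h_rest ⊢
    omega

theorem exists_power_word_length_le_general (n : ℕ) :
    ∃ w : List (Fin 2),
      (∀ a : Fin 2, ¬ [a, a, a] <:+: w) ∧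
      (∀ u : List (Fin 2), u.length = n → (∀ a : Fin 2, ¬ [a, a, a] <:+: u) → u <:+: w) ∧
      w.length ≤ 2 * (n + 1) * Nat.fib (n + 1) := by
  set words := (List.finRange 2).flatMap (noTripleRepeatWords n)
  have mem_words {u} : u ∈ words ↔ u.length = n ∧ NoTripleRepeat u := by
    simp only [words, List.mem_flatMap, List.mem_finRange, true_and, mem_noTripleRepeatWords]
    refine ⟨fun ⟨_, h⟩ => ⟨h.1, h.2.1⟩, fun h => ⟨u.headI, h.1, h.2, ?_⟩⟩
    cases u <;> simp
  refine ⟨joinWithSep words, noTripleRepeat_joinWithSep fun u hu => (mem_words.1 hu).2,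
    fun u hlen hu => infix_joinWithSep (mem_words.2 ⟨hlen, hu⟩), ?_⟩
  calc (joinWithSep words).length ≤ words.length * (n + 1) :=
        length_joinWithSep_le fun u hu => (mem_words.1 hu).1.le
    _ = 2 * (n + 1) * Nat.fib (n + 1) := by
        simp [words, List.length_flatMap, length_noTripleRepeatWords]
        ring

/-- for every `n ≥ 1` there is an `n`-power word `w` over two letters with
powers `{1,2}` (a word with no triple repeats containing every length-`n` no-triple-repeats
word as an infix) of length at most `2·(n+1)·Fib (n+1)`. -/
theorem exists_power_word_length_le (n : ℕ) (hn : 1 ≤ n) :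
    ∃ w : List (Fin 2),
      (∀ a : Fin 2, ¬ [a, a, a] <:+: w) ∧
      (∀ u : List (Fin 2), u.length = n → (∀ a : Fin 2, ¬ [a, a, a] <:+: u) → u <:+: w) ∧
      w.length ≤ 2 * (n + 1) * Nat.fib (n + 1) :=
  exists_power_word_length_le_general n
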